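/- There are no integers x, y with x > |y| satisfying (x² − y² − 5)² = 5(3x + y) + 29 together with the following: either x + y ≤ 1, or x − y ≤ 2, or (x + y > 1, x − y > 2, (x+y−1)(x−y−2) ≤ 10, and (x,y) ≠ (3,−1)); moreover (x,y) = (3,−1) does not satisfy the equation either. Hence the equation (x² − y² − 5)² = 5(3x + y) + 29 has no integer solutions with x > |y| and (x+y−1)(x−y−2) ≤ 10, nor with x + y ≤ 1 or x − y ≤ 2. -/
import Mathlib


/-- Numerical obstruction for embedding a fake quadric of odd type in ℙ⁴:
(x² − y² − 5)² = 5(3x + y) + 29 has no integer solution with x > |y| and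
(x + y ≤ 1, or x − y ≤ 2, or (x+y > 1, x−y > 2, (x+y−1)(x−y−2) ≤ 10, (x,y) ≠ (3,−1)));
moreover (x,y) = (3,−1) does not satisfy the equation either. -/
theorem no_odd_type_embedding_solution :
    (¬ ∃ x y : ℤ, |y| < x ∧
        (x ^ 2 - y ^ 2 - 5) ^ 2 = 5 * (3 * x + y) + 29 ∧
        (x + y ≤ 1 ∨ x - y ≤ 2 ∨
          (1 < x + y ∧ 2 < x - y ∧ (x + y - 1) * (x - y - 2) ≤ 10 ∧ (x, y) ≠ (3, -1)))) ∧
    ¬ ((3 : ℤ) ^ 2 - (-1 : ℤ) ^ 2 - 5) ^ 2 = 5 * (3 * 3 + (-1)) + 29 := by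
  constructor
  · rintro ⟨x, y, hxy, heq, -⟩
    obtain ⟨hy1, hy2⟩ := abs_lt.mp hxy
    have hx1 : 1 ≤ x := by omega
    have hx10 : x ≤ 10 := by
      by_contra h
      push_neg at h
      have A : (0:ℤ) ≤ (x - 1 - y) * (x - 1 + y) :=
        mul_nonneg (by omega) (by omega)
      have B : (0:ℤ) ≤ (x + 1) ^ 2 - 12 - y ^ 2 := by nlinarith
      nlinarith [mul_nonneg A B]
    clear hxy
    interval_cases x <;> interval_cases y <;> norm_num at heq
  · norm_num
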